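/- arXiv:math/0312378 — 7 statements merged into one kernel-verified Lean document; each statement's English description precedes it below -/
import Mathlib

section
/- Let G be a locally compact Hausdorff totally disconnected topological group and let H be a compact subgroup of G. Then there exists a compact open subgroup of G containing H. -/
/-!
Take a compact open neighbourhood `V` of `1`, which exists by zero-dimensionality. The set
`W = H V` is compact, open, contains `1` and is invariant under left multiplication by `H`.
Its setwise stabilizer `{g | g W = W}` is the required subgroup: it contains `H`, it lies in `W`
because `1 ∈ W`, and it is open because compactness of `W` gives a neighbourhood `U` of `1`
with `U W ⊆ W`.
-/

open Set Pointwise MulAction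

theorem exists_isCompact_isOpen_mem {X : Type*} [TopologicalSpace X] [LocallyCompactSpace X]
    [T2Space X] [TotallyDisconnectedSpace X] (x : X) :
    ∃ V : Set X, IsCompact V ∧ IsOpen V ∧ x ∈ V := by
  obtain ⟨C, hC, hxC⟩ := exists_compact_mem_nhds x
  obtain ⟨V, ⟨hV, hxV⟩, hVC⟩ :=
    loc_compact_Haus_tot_disc_of_zero_dim.nhds_hasBasis.mem_iff.mp hxC
  exact ⟨V, hC.of_isClosed_subset hV.isClosed hVC, hV.isOpen, hxV⟩

namespace Subgroup

variable {G : Type*} [Group G]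

theorem le_stabilizer_mul (H : Subgroup G) (s : Set G) :
    H ≤ stabilizer G ((H : Set G) * s) := fun h hh => by
  rw [mem_stabilizer_iff, ← smul_mul_assoc, smul_coe_set hh]

end Subgroup

section TopologicalGroup

variable {G : Type*} [Group G]

theorem MulAction.stabilizer_subset_of_one_mem {s : Set G} (hs : (1 : G) ∈ s) :
    (stabilizer G s : Set G) ⊆ s :=
  (subset_mul_left _ hs).trans (stabilizer_mul_self s).subset

variable [TopologicalSpace G] [IsTopologicalGroup G]

theorem IsCompact.isOpen_stabilizer {s : Set G} (hs : IsCompact s) (hs' : IsOpen s) :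
    IsOpen (stabilizer G s : Set G) := by
  obtain ⟨U, hU, hUs⟩ := compact_open_separated_mul_left hs hs' subset_rfl
  refine Subgroup.isOpen_of_mem_nhds _
    (Filter.mem_of_superset (Filter.inter_mem hU (inv_mem_nhds_one G hU)) ?_)
  rintro u ⟨hu, hu_inv⟩
  have hus : u • s ⊆ s := (smul_set_subset_mul hu).trans hUs
  have hu_inv_s : u⁻¹ • s ⊆ s := (smul_set_subset_mul (mem_inv.1 hu_inv)).trans hUs
  exact mem_stabilizer_iff.2 (hus.antisymm (subset_smul_set_iff.2 hu_inv_s))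

theorem IsCompact.isCompact_stabilizer {s : Set G} (hs : IsCompact s) (hs' : IsOpen s)
    (hs₁ : (1 : G) ∈ s) : IsCompact (stabilizer G s : Set G) :=
  hs.of_isClosed_subset (Subgroup.isClosed_of_isOpen _ (hs.isOpen_stabilizer hs'))
    (stabilizer_subset_of_one_mem hs₁)

end TopologicalGroup

/-- In a locally compact Hausdorff totally disconnected topological group, every compact
subgroup is contained in a compact open subgroup. -/
theorem exists_compact_open_subgroup_containing
    (G : Type*) [Group G] [TopologicalSpace G] [IsTopologicalGroup G]
    [LocallyCompactSpace G] [T2Space G] [TotallyDisconnectedSpace G]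
    (H : Subgroup G) (hH : IsCompact (H : Set G)) :
    ∃ K : Subgroup G, IsCompact (K : Set G) ∧ IsOpen (K : Set G) ∧ H ≤ K := by
  obtain ⟨V, hVc, hVo, hV1⟩ := exists_isCompact_isOpen_mem (1 : G)
  set W : Set G := (H : Set G) * V
  have hWc : IsCompact W := hH.mul hVc
  have hWo : IsOpen W := hVo.mul_left
  have hW₁ : (1 : G) ∈ W := ⟨1, H.one_mem, 1, hV1, one_mul 1⟩
  exact ⟨stabilizer G W, hWc.isCompact_stabilizer hWo hW₁, hWc.isOpen_stabilizer hWo,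
    H.le_stabilizer_mul V⟩
end

section
/- Let G be a Hausdorff topological group, let K be a compact open subgroup of G and let H be a compact subgroup of G. Then L := ⋂_{h ∈ H} hKh⁻¹ is a compact open subgroup of G satisfying hLh⁻¹ = L for all h ∈ H (in fact L equals a finite intersection ⋂_{i=1}^{s} h_iKh_i⁻¹ for suitable h_1,…,h_s ∈ H), and the set LH = { lh : l ∈ L, h ∈ H } is a compact open subgroup of G containing H. -/
/-!
The normalizer of `K` is open, since it contains `K`, so the compact group `H` is covered by
finitely many of its left cosets `h N(K)`. As `hKh⁻¹` only depends on the coset `h N(K)`, the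
intersection `L` of the conjugates is a finite one, hence open, and it is compact as a closed
subgroup of `K`. Conjugating by `h ∈ H` permutes the conjugates, so `H` normalizes `L`, which makes
`LH = L ⊔ H` a subgroup; it is compact as a product of compact sets and open as a union of
translates of `L`.
-/

open scoped Pointwise

namespace Subgroup

variable {G : Type*} [Group G] (K H : Subgroup G)

def iInfConj : Subgroup G := ⨅ h : H, K.map (MulAut.conj (h : G)).toMonoidHom

variable {K H}

theorem map_conj_map_conj (g h : G) :
    (K.map (MulAut.conj h).toMonoidHom).map (MulAut.conj g).toMonoidHom =
      K.map (MulAut.conj (g * h)).toMonoidHom := by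
  rw [map_map, map_mul]
  rfl

theorem map_conj_one : K.map (MulAut.conj (1 : G)).toMonoidHom = K := by
  rw [map_one]
  exact map_id K

theorem map_conj_of_mem_normalizer {n : G} (hn : n ∈ normalizer (K : Set G)) :
    K.map (MulAut.conj n).toMonoidHom = K :=
  mem_normalizer_iff_map_conj_eq.1 hn

theorem map_conj_mul_of_mem_normalizer (g : G) {n : G} (hn : n ∈ normalizer (K : Set G)) :
    K.map (MulAut.conj (g * n)).toMonoidHom = K.map (MulAut.conj g).toMonoidHom := by
  rw [← map_conj_map_conj, map_conj_of_mem_normalizer hn]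

theorem map_conj_iInfConj {h : G} (hh : h ∈ H) :
    (K.iInfConj H).map (MulAut.conj h).toMonoidHom = K.iInfConj H := by
  rw [iInfConj, map_iInf _ (MulAut.conj h).injective]
  simp_rw [map_conj_map_conj]
  exact (Equiv.mulLeft (⟨h, hh⟩ : H)).iInf_comp
    (g := fun x : H => K.map (MulAut.conj (x : G)).toMonoidHom)

theorem le_normalizer_iInfConj : H ≤ normalizer (K.iInfConj H : Set G) :=
  fun _ hh => mem_normalizer_iff_map_conj_eq.2 (map_conj_iInfConj hh)

theorem iInfConj_le : K.iInfConj H ≤ K :=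
  iInf_le_of_le ⟨1, H.one_mem⟩ map_conj_one.le

theorem iInfConj_eq_biInf_of_subset_iUnion {s : Finset G} (hsH : ∀ h ∈ s, h ∈ H)
    (hHs : (H : Set G) ⊆ ⋃ g ∈ s, g • (normalizer (K : Set G) : Set G)) :
    K.iInfConj H = ⨅ h ∈ s, K.map (MulAut.conj h).toMonoidHom := by
  refine le_antisymm (le_iInf₂ fun h hh => iInf_le_of_le ⟨h, hsH h hh⟩ le_rfl)
    (le_iInf fun x => ?_)
  obtain ⟨g, hg, hx⟩ := Set.mem_iUnion₂.1 (hHs x.2)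
  obtain ⟨n, hn, hgn⟩ := Set.mem_smul_set.1 hx
  rw [← hgn, smul_eq_mul, map_conj_mul_of_mem_normalizer g hn]
  exact iInf₂_le g hg

section Topology

variable [TopologicalSpace G] [SeparatelyContinuousMul G]

theorem isOpen_map_conj (hK : IsOpen (K : Set G)) (g : G) :
    IsOpen (K.map (MulAut.conj g).toMonoidHom : Set G) := by
  rw [map_equiv_eq_comap_symm']
  exact hK.preimage <| (IsTopologicalGroup.continuous_conj g⁻¹).congr fun x => by simp

theorem _root_.IsCompact.exists_finset_subset_iUnion_smul {S : Set G} (hS : IsCompact S)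
    {N : Subgroup G} (hN : IsOpen (N : Set G)) :
    ∃ t : Finset G, (∀ g ∈ t, g ∈ S) ∧ S ⊆ ⋃ g ∈ t, g • (N : Set G) := by
  obtain ⟨t, htS, ht, hSt⟩ := hS.elim_finite_subcover_image (b := S)
    (c := fun g => g • (N : Set G)) (fun g _ => hN.smul g)
    (fun x hx => Set.mem_biUnion hx ⟨1, N.one_mem, mul_one x⟩)
  exact ⟨ht.toFinset, fun g hg => htS (ht.mem_toFinset.1 hg), by simpa using hSt⟩

theorem exists_finset_iInfConj_eq (hK : IsOpen (K : Set G)) (hH : IsCompact (H : Set G)) :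
    ∃ s : Finset G, s.Nonempty ∧ (∀ h ∈ s, h ∈ H) ∧
      K.iInfConj H = ⨅ h ∈ s, K.map (MulAut.conj h).toMonoidHom := by
  obtain ⟨s, hsH, hHs⟩ :=
    hH.exists_finset_subset_iUnion_smul (isOpen_mono le_normalizer hK)
  obtain ⟨g, hg, -⟩ := Set.mem_iUnion₂.1 (hHs H.one_mem)
  exact ⟨s, ⟨g, hg⟩, hsH, iInfConj_eq_biInf_of_subset_iUnion hsH hHs⟩

theorem isOpen_iInfConj (hK : IsOpen (K : Set G)) (hH : IsCompact (H : Set G)) :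
    IsOpen (K.iInfConj H : Set G) := by
  obtain ⟨s, -, -, hs⟩ := exists_finset_iInfConj_eq hK hH
  simp only [hs, coe_iInf]
  exact isOpen_biInter_finset fun g _ => isOpen_map_conj hK g

theorem isCompact_iInfConj (hKc : IsCompact (K : Set G)) (hKo : IsOpen (K : Set G))
    (hH : IsCompact (H : Set G)) : IsCompact (K.iInfConj H : Set G) :=
  hKc.of_isClosed_subset ((K.iInfConj H).isClosed_of_isOpen (isOpen_iInfConj hKo hH))
    iInfConj_le

end Topology

end Subgroup

theorem compact_open_subgroup_inter_conjugates_general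
    (G : Type*) [Group G] [TopologicalSpace G] [IsTopologicalGroup G]
    (K H : Subgroup G)
    (hKc : IsCompact (K : Set G)) (hKo : IsOpen (K : Set G))
    (hHc : IsCompact (H : Set G))
    (L : Subgroup G)
    (hL : L = ⨅ h : H, Subgroup.map (MulAut.conj (h : G)).toMonoidHom K) :
    (IsCompact (L : Set G) ∧ IsOpen (L : Set G)) ∧
    (∀ h ∈ H, Subgroup.map (MulAut.conj h).toMonoidHom L = L) ∧
    (∃ s : Finset G, s.Nonempty ∧ (∀ h ∈ s, h ∈ H) ∧
      L = ⨅ h ∈ s, Subgroup.map (MulAut.conj h).toMonoidHom K) ∧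
    (∃ M : Subgroup G, (M : Set G) = (L : Set G) * (H : Set G) ∧
      IsCompact (M : Set G) ∧ IsOpen (M : Set G) ∧ H ≤ M) := by
  obtain rfl : L = K.iInfConj H := hL
  have hLc := Subgroup.isCompact_iInfConj hKc hKo hHc
  have hLo := Subgroup.isOpen_iInfConj hKo hHc
  have hLH : ((K.iInfConj H ⊔ H : Subgroup G) : Set G) = K.iInfConj H * H :=
    Subgroup.coe_mul_of_right_le_normalizer_left _ _ Subgroup.le_normalizer_iInfConj
  refine ⟨⟨hLc, hLo⟩, fun h hh => Subgroup.map_conj_iInfConj hh,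
    Subgroup.exists_finset_iInfConj_eq hKo hHc, K.iInfConj H ⊔ H, hLH, ?_, ?_, le_sup_right⟩
  · exact hLH ▸ hLc.mul hHc
  · exact hLH ▸ hLo.mul_right

/-- If `K` is a compact open subgroup and `H` a compact subgroup of a Hausdorff topological
group `G`, then `L = ⋂_{h ∈ H} hKh⁻¹` is a compact open subgroup, normalized by `H`,
equal to a finite intersection of conjugates of `K` by elements of `H`, and `LH` is a
compact open subgroup of `G` containing `H`. -/
theorem compact_open_subgroup_inter_conjugates
    (G : Type*) [Group G] [TopologicalSpace G] [IsTopologicalGroup G] [T2Space G]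
    (K H : Subgroup G)
    (hKc : IsCompact (K : Set G)) (hKo : IsOpen (K : Set G))
    (hHc : IsCompact (H : Set G))
    (L : Subgroup G)
    (hL : L = ⨅ h : H, Subgroup.map (MulAut.conj (h : G)).toMonoidHom K) :
    (IsCompact (L : Set G) ∧ IsOpen (L : Set G)) ∧
    (∀ h ∈ H, Subgroup.map (MulAut.conj h).toMonoidHom L = L) ∧
    (∃ s : Finset G, s.Nonempty ∧ (∀ h ∈ s, h ∈ H) ∧
      L = ⨅ h ∈ s, Subgroup.map (MulAut.conj h).toMonoidHom K) ∧
    (∃ M : Subgroup G, (M : Set G) = (L : Set G) * (H : Set G) ∧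
      IsCompact (M : Set G) ∧ IsOpen (M : Set G) ∧ H ≤ M) :=
  compact_open_subgroup_inter_conjugates_general G K H hKc hKo hHc L hL
end

section
/- Let T be a tree (a connected acyclic simple graph) with nonempty vertex set, and let a group H act on the vertices of T by graph automorphisms without inversions. If the orbit H·v₀ of some vertex v₀ is finite (for example if H is a finite group), then there exists a vertex of T fixed by every element of H. -/
open SimpleGraph

private lemma tree_path_length {V : Type*} {T : SimpleGraph V} (hT : T.IsTree)
    {u v : V} {P : T.Walk u v} (hP : P.IsPath) : P.length = T.dist u v := by
  obtain ⟨Q, hQ, hQl⟩ := hT.isConnected.exists_path_of_dist u v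
  rw [(hT.existsUnique_path u v).unique hP hQ, hQl]

private lemma walk_getVert_dist_le {V : Type*} {T : SimpleGraph V} (hconn : T.Connected)
    {u v : V} (W : T.Walk u v) : ∀ i j : ℕ, i ≤ j →
    T.dist (W.getVert i) (W.getVert j) ≤ j - i := by
  induction W with
  | nil =>
    intro i j _
    rw [Walk.getVert_of_length_le _ (by simp only [Walk.length_nil]; omega),
      Walk.getVert_of_length_le _ (by simp only [Walk.length_nil]; omega)]
    rw [SimpleGraph.dist_self]
    omega
  | @cons a b c h q ih =>
    intro i j hij
    match i, j with
    | 0, 0 => simp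
    | 0, (j+1) =>
      rw [Walk.getVert_zero, Walk.getVert_cons_succ]
      have h1 : T.dist a b = 1 := dist_eq_one_iff_adj.mpr h
      have h2 := ih 0 j (Nat.zero_le _)
      rw [Walk.getVert_zero] at h2
      have h3 := hconn.dist_triangle (u := a) (v := b) (w := q.getVert j)
      omega
    | (i+1), (j+1) =>
      rw [Walk.getVert_cons_succ, Walk.getVert_cons_succ]
      have := ih i j (by omega)
      omega

private lemma walk_split {V : Type*} {T : SimpleGraph V} {a s : V}
    (P : T.Walk a s) (S : Set V) (hs : s ∈ S) :
    ∃ (p : V) (W1 : T.Walk a p) (W2 : T.Walk p s), P = W1.append W2 ∧ p ∈ S ∧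
      ∀ x ∈ W1.support, x ∈ S → x = p := by
  induction P with
  | nil => exact ⟨_, Walk.nil, Walk.nil, rfl, hs, by simp⟩
  | @cons a b c h q ih =>
    by_cases ha : a ∈ S
    · exact ⟨a, Walk.nil, Walk.cons h q, rfl, ha, by simp⟩
    · obtain ⟨p, W1, W2, hsplit, hp, hmin⟩ := ih hs
      refine ⟨p, Walk.cons h W1, W2, by rw [hsplit, Walk.cons_append], hp, ?_⟩
      intro x hx hxS
      rw [Walk.support_cons, List.mem_cons] at hx
      rcases hx with rfl | hx
      · exact absurd hxS ha
      · exact hmin x hx hxS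

private lemma tree_median {V : Type*} {T : SimpleGraph V} (hT : T.IsTree) (a b s : V) :
    ∃ p : V, T.dist a p + T.dist p b = T.dist a b ∧
      T.dist a p + T.dist p s = T.dist a s ∧
      T.dist b p + T.dist p s = T.dist b s := by
  classical
  obtain ⟨P, hP, hPl⟩ := hT.isConnected.exists_path_of_dist a s
  obtain ⟨Q, hQ, hQl⟩ := hT.isConnected.exists_path_of_dist b s
  obtain ⟨p, W1, W2, hsplit, hpQ, hmin⟩ :=
    walk_split P {x | x ∈ Q.support} (Q.end_mem_support)
  have hpQ' : p ∈ Q.support := hpQ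
  have hW1 : W1.IsPath := Walk.IsPath.of_append_left (hsplit ▸ hP)
  have hW2 : W2.IsPath := Walk.IsPath.of_append_right (hsplit ▸ hP)
  have l1 : W1.length = T.dist a p := tree_path_length hT hW1
  have l2 : W2.length = T.dist p s := tree_path_length hT hW2
  have e2 : T.dist a p + T.dist p s = T.dist a s := by
    rw [← l1, ← l2, ← Walk.length_append, ← hsplit, hPl]
  have hQ1 : (Q.takeUntil p hpQ').IsPath := hQ.takeUntil hpQ'
  have hQ2 : (Q.dropUntil p hpQ').IsPath := hQ.dropUntil hpQ'
  have l3 : (Q.takeUntil p hpQ').length = T.dist b p := tree_path_length hT hQ1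
  have l4 : (Q.dropUntil p hpQ').length = T.dist p s := tree_path_length hT hQ2
  have e3 : T.dist b p + T.dist p s = T.dist b s := by
    rw [← l3, ← l4, ← Walk.length_append, Walk.take_spec Q hpQ', hQl]
  have hnp : p ∉ (Q.takeUntil p hpQ').reverse.support.tail := by
    have hnd := hQ1.reverse.support_nodup
    rw [Walk.support_eq_cons] at hnd
    exact (List.nodup_cons.mp hnd).1
  have hR : (W1.append (Q.takeUntil p hpQ').reverse).IsPath := by
    rw [Walk.isPath_def, Walk.support_append]
    refine List.Nodup.append hW1.support_nodup hQ1.reverse.support_nodup.tail ?_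
    intro x hx hx'
    have hxQ : x ∈ Q.support := by
      apply Walk.support_takeUntil_subset Q hpQ'
      have : x ∈ (Q.takeUntil p hpQ').reverse.support := List.mem_of_mem_tail hx'
      simpa using this
    have : x = p := hmin x hx hxQ
    subst this
    exact hnp hx'
  have e1 : T.dist a p + T.dist p b = T.dist a b := by
    have lR := tree_path_length hT hR
    rw [Walk.length_append, Walk.length_reverse, l1, l3] at lR
    rw [SimpleGraph.dist_comm (u := p) (v := b)]
    exact lR
  exact ⟨p, e1, e2, e3⟩

private lemma tree_colinear {V : Type*} {T : SimpleGraph V} (hT : T.IsTree) {u v c p : V}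
    (hc : T.dist u c + T.dist c v = T.dist u v)
    (hp : T.dist u p + T.dist p v = T.dist u v) :
    T.dist c p ≤ (T.dist u c - T.dist u p) + (T.dist u p - T.dist u c) := by
  obtain ⟨A, hA⟩ := hT.isConnected.exists_walk_length_eq_dist u c
  obtain ⟨B, hB⟩ := hT.isConnected.exists_walk_length_eq_dist c v
  obtain ⟨C, hC⟩ := hT.isConnected.exists_walk_length_eq_dist u p
  obtain ⟨D, hD⟩ := hT.isConnected.exists_walk_length_eq_dist p v
  have hW : (A.append B).IsPath := (A.append B).isPath_of_length_eq_dist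
    (by rw [Walk.length_append, hA, hB, hc])
  have hW' : (C.append D).IsPath := (C.append D).isPath_of_length_eq_dist
    (by rw [Walk.length_append, hC, hD, hp])
  have heq : A.append B = C.append D := (hT.existsUnique_path u v).unique hW hW'
  have hcv : (C.append D).getVert (T.dist u c) = c := by
    rw [← heq, Walk.getVert_append]
    simp [hA]
  have hpv : (C.append D).getVert (T.dist u p) = p := by
    rw [Walk.getVert_append]
    simp [hC]
  rcases le_total (T.dist u c) (T.dist u p) with hle | hle
  · have := walk_getVert_dist_le hT.isConnected (C.append D) _ _ hle
    rw [hcv, hpv] at this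
    omega
  · have := walk_getVert_dist_le hT.isConnected (C.append D) _ _ hle
    rw [hcv, hpv] at this
    rw [SimpleGraph.dist_comm] at this
    omega

private lemma exists_dist_split {V : Type*} {T : SimpleGraph V} (hconn : T.Connected)
    (u v : V) {k : ℕ} (hk : k ≤ T.dist u v) :
    ∃ c : V, T.dist u c = k ∧ T.dist c v = T.dist u v - k := by
  obtain ⟨W, hW⟩ := hconn.exists_walk_length_eq_dist u v
  refine ⟨W.getVert k, ?_⟩
  have h1 : T.dist u (W.getVert k) ≤ k := by
    have := walk_getVert_dist_le hconn W 0 k (Nat.zero_le _)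
    rw [Walk.getVert_zero] at this
    omega
  have h2 : T.dist (W.getVert k) v ≤ T.dist u v - k := by
    have := walk_getVert_dist_le hconn W k W.length (by omega)
    rw [Walk.getVert_length] at this
    omega
  have h3 := hconn.dist_triangle (u := u) (v := W.getVert k) (w := v)
  omega

/-- If a group `H` acts on a tree `T` by graph automorphisms without inversions and some
vertex has a finite orbit, then `H` fixes a vertex. -/
theorem exists_fixed_vertex_of_finite_orbit
    {V : Type*} (T : SimpleGraph V) (hT : T.IsTree)
    (H : Type*) [Group H] [MulAction H V]
    (hadj : ∀ (h : H) (a b : V), T.Adj a b → T.Adj (h • a) (h • b))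
    (hnoinv : ∀ (h : H) (a b : V), T.Adj a b → ¬(h • a = b ∧ h • b = a))
    (v₀ : V) (horb : (MulAction.orbit H v₀).Finite) :
    ∃ v : V, ∀ h : H, h • v = v := by
  classical
  have hconn := hT.isConnected
  -- distance is preserved by the action
  have hsmul_le : ∀ (h : H) (x y : V), T.dist (h • x) (h • y) ≤ T.dist x y := by
    intro h x y
    obtain ⟨W, hW⟩ := hconn.exists_walk_length_eq_dist x y
    let F : T →g T := ⟨fun z => h • z, fun hab => hadj h _ _ hab⟩
    have hle := dist_le (W.map F)
    rw [Walk.length_map, hW] at hle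
    exact hle
  have hdist : ∀ (h : H) (x y : V), T.dist (h • x) (h • y) = T.dist x y := by
    intro h x y
    refine le_antisymm (hsmul_le h x y) ?_
    have := hsmul_le h⁻¹ (h • x) (h • y)
    simpa using this
  set F : Finset V := horb.toFinset with hF
  have hFmem : ∀ x, x ∈ F ↔ x ∈ MulAction.orbit H v₀ := fun x => horb.mem_toFinset
  have hFne : F.Nonempty := ⟨v₀, (hFmem v₀).mpr (MulAction.mem_orbit_self v₀)⟩
  have hFinv : ∀ (h : H) (x : V), x ∈ F → h • x ∈ F := by
    intro h x hx
    rw [hFmem] at hx ⊢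
    obtain ⟨g, rfl⟩ := hx
    exact ⟨h * g, (mul_smul h g v₀)⟩
  set r : V → ℕ := fun v => F.sup' hFne (fun s => T.dist v s) with hr
  have hr_le : ∀ v s, s ∈ F → T.dist v s ≤ r v := by
    intro v s hs
    exact Finset.le_sup' (fun s => T.dist v s) hs
  have hr_bound : ∀ v n, (∀ s ∈ F, T.dist v s ≤ n) → r v ≤ n := by
    intro v n hn
    exact Finset.sup'_le _ _ hn
  have r_equi : ∀ (h : H) (v : V), r (h • v) = r v := by
    intro h v
    refine le_antisymm (hr_bound _ _ ?_) (hr_bound _ _ ?_)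
    · intro s hs
      have : T.dist (h • v) s = T.dist v (h⁻¹ • s) := by
        conv_lhs => rw [show s = h • (h⁻¹ • s) by simp]
        exact hdist h v (h⁻¹ • s)
      rw [this]
      exact hr_le v _ (hFinv h⁻¹ s hs)
    · intro s hs
      have : T.dist v s = T.dist (h • v) (h • s) := (hdist h v s).symm
      rw [this]
      exact hr_le _ _ (hFinv h s hs)
  have : Nonempty V := hconn.nonempty
  set m : ℕ := sInf (Set.range r) with hm
  obtain ⟨a, ha⟩ : ∃ a, r a = m := by
    have := Nat.sInf_mem (Set.range_nonempty r)
    exact this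
  have hmin : ∀ v, m ≤ r v := fun v => Nat.sInf_le (Set.mem_range_self v)
  -- any two centers are adjacent
  have key : ∀ u v : V, r u = m → r v = m → u ≠ v → T.Adj u v := by
    intro u v hu hv huv
    by_contra hadj'
    have hDpos : 0 < T.dist u v := hconn.pos_dist_of_ne huv
    have hD2 : 2 ≤ T.dist u v := by
      by_contra hlt
      push_neg at hlt
      have h1 : T.dist u v = 1 := by omega
      exact hadj' (dist_eq_one_iff_adj.mp h1)
    set D := T.dist u v with hDdef
    set k := D / 2 with hk
    obtain ⟨c, hc1, hc2⟩ := exists_dist_split hconn u v (k := k) (by omega)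
    have hcenter : r c ≤ m - k := by
      apply hr_bound
      intro s hs
      obtain ⟨p, e1, e2, e3⟩ := tree_median hT u v s
      have hus : T.dist u s ≤ m := hu ▸ hr_le u s hs
      have hvs : T.dist v s ≤ m := hv ▸ hr_le v s hs
      have hcol : T.dist c p ≤ (T.dist u c - T.dist u p) + (T.dist u p - T.dist u c) :=
        tree_colinear (v := v) hT (by omega) (by omega)
      have htri := hconn.dist_triangle (u := c) (v := p) (w := s)
      have hpv : T.dist v p = T.dist p v := SimpleGraph.dist_comm ..
      omega
    obtain ⟨s0, hs0⟩ := hFne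
    have h1 := hr_le u s0 hs0
    have h2 := hr_le v s0 hs0
    have h3 := hconn.dist_triangle (u := u) (v := s0) (w := v)
    have h4 : T.dist s0 v = T.dist v s0 := SimpleGraph.dist_comm ..
    have := hmin c
    omega
  -- conclude
  by_cases hall : ∀ h : H, h • a = a
  · exact ⟨a, hall⟩
  push_neg at hall
  obtain ⟨h₀, hb⟩ := hall
  set b := h₀ • a with hbdef
  have hrb : r b = m := by rw [hbdef, r_equi, ha]
  have hab : T.Adj a b := key a b ha hrb (Ne.symm hb)
  have hC2 : ∀ x, r x = m → x = a ∨ x = b := by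
    intro x hx
    by_contra hx2
    push_neg at hx2
    obtain ⟨hxa, hxb⟩ := hx2
    have h1 : T.Adj a x := key a x ha hx hxa.symm
    have h2 : T.Adj x b := key x b hx hrb hxb
    -- two distinct paths from a to b: contradiction
    have p1 : (Walk.cons hab Walk.nil : T.Walk a b).IsPath := by
      simp [Walk.isPath_def, hab.ne]
    have p2 : (Walk.cons h1 (Walk.cons h2 Walk.nil) : T.Walk a b).IsPath := by
      simp [Walk.isPath_def, h2.ne, hxa.symm, hab.ne]
    have := (hT.existsUnique_path a b).unique p1 p2
    have := congrArg Walk.length this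
    simp at this
  have : ∀ h : H, h • a = a := by
    intro h
    have hha : r (h • a) = m := by rw [r_equi, ha]
    have hhb : r (h • b) = m := by rw [r_equi, hrb]
    rcases hC2 _ hha with h1 | h1
    · exact h1
    · exfalso
      rcases hC2 _ hhb with h2 | h2
      · exact hnoinv h a b hab ⟨h1, h2⟩
      · have : h • a = h • b := by rw [h1, h2]
        have := smul_left_cancel h this
        exact hab.ne this
  exact ⟨a, this⟩
end

section
/- Let G be a group satisfying conditions (M) and (NM). Let H be a nontrivial finite subgroup of G, let M be a nontrivial maximal finite subgroup of G, and let g, k ∈ G be elements with g⁻¹Hg ≤ M and k⁻¹Hk ≤ M. Then gM = kM, i.e. k⁻¹g ∈ M. Consequently, for every nontrivial finite subgroup H and every nontrivial maximal finite subgroup M of G, the set of H-fixed points of the left G-set G/M contains at most one coset. -/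
/-- A subgroup `M` of `G` is a maximal finite subgroup if it is finite and not properly
contained in any finite subgroup of `G`. -/
def IsMaxFiniteSubgroup {G : Type*} [Group G] (M : Subgroup G) : Prop :=
  (M : Set G).Finite ∧ ∀ N : Subgroup G, (N : Set G).Finite → M ≤ N → M = N

/-!
If `g⁻¹Hg ≤ M` then `H` lies in the conjugate `gMg⁻¹`, which is again a maximal finite
subgroup. By uniqueness in (M), `gMg⁻¹ = kMk⁻¹`, so `k⁻¹g` normalizes `M` and hence lies
in `M` by (NM). An `H`-fixed coset `gM` is exactly one with `g⁻¹Hg ≤ M`.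
-/

open Pointwise

section

variable {G : Type*} [Group G]

theorem IsMaxFiniteSubgroup.smul {A : Type*} [Group A] [MulDistribMulAction A G]
    {M : Subgroup G} (hM : IsMaxFiniteSubgroup M) (a : A) : IsMaxFiniteSubgroup (a • M) := by
  refine ⟨by rw [Subgroup.coe_pointwise_smul]; exact hM.1.smul_set, fun N hN hle => ?_⟩
  have hN' : ((a⁻¹ • N : Subgroup G) : Set G).Finite := by
    rw [Subgroup.coe_pointwise_smul]; exact hN.smul_set
  have hle' : M ≤ a⁻¹ • N :=
    Subgroup.pointwise_smul_le_pointwise_smul_iff.1 (by rwa [smul_inv_smul])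
  rw [hM.2 _ hN' hle', smul_inv_smul]

theorem Subgroup.le_conjAct_smul_iff {H M : Subgroup G} {g : G} :
    H ≤ ConjAct.toConjAct g • M ↔ ∀ h ∈ H, g⁻¹ * h * g ∈ M := by
  simp only [SetLike.le_def, Subgroup.mem_pointwise_smul_iff_inv_smul_mem, ← map_inv,
    ConjAct.toConjAct_smul, inv_inv]

theorem QuotientGroup.smul_mk_eq_self_iff {M : Subgroup G} {h g : G} :
    h • (g : G ⧸ M) = g ↔ g⁻¹ * h * g ∈ M := by
  rw [MulAction.Quotient.smul_mk, QuotientGroup.eq, ← M.inv_mem_iff, smul_eq_mul]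
  group

theorem inv_mul_mem_of_le_conjAct_smul {H M : Subgroup G}
    (hH : ∃! L : Subgroup G, IsMaxFiniteSubgroup L ∧ H ≤ L) (hM : IsMaxFiniteSubgroup M)
    (hMself : Subgroup.normalizer (M : Set G) = M) {g k : G}
    (hg : H ≤ ConjAct.toConjAct g • M) (hk : H ≤ ConjAct.toConjAct k • M) :
    k⁻¹ * g ∈ M := by
  have hgk : ConjAct.toConjAct g • M = ConjAct.toConjAct k • M :=
    hH.unique ⟨hM.smul _, hg⟩ ⟨hM.smul _, hk⟩
  have hfix : ConjAct.toConjAct (k⁻¹ * g) • M = M := by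
    rw [map_mul, mul_smul, hgk, map_inv, inv_smul_smul]
  rw [← hMself]
  exact Subgroup.conjAct_pointwise_smul_iff.1 hfix

end

/-- For a group satisfying (M) (every nontrivial finite subgroup lies in a unique maximal
finite subgroup) and (NM) (nontrivial maximal finite subgroups are self-normalizing):
if `g⁻¹Hg ≤ M` and `k⁻¹Hk ≤ M` for a nontrivial finite subgroup `H` and a nontrivial
maximal finite subgroup `M`, then `k⁻¹g ∈ M`; consequently the `H`-fixed point set of
`G/M` contains at most one coset. -/
theorem fixed_points_of_quotient_by_maximal_finite_subsingleton
    {G : Type*} [Group G]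
    (condM : ∀ H : Subgroup G, H ≠ ⊥ → (H : Set G).Finite →
      ∃! M : Subgroup G, IsMaxFiniteSubgroup M ∧ H ≤ M)
    (condNM : ∀ M : Subgroup G, IsMaxFiniteSubgroup M → M ≠ ⊥ → Subgroup.normalizer (M : Set G) = M)
    (H M : Subgroup G) (hH : H ≠ ⊥) (hHfin : (H : Set G).Finite)
    (hM : IsMaxFiniteSubgroup M) (hMnt : M ≠ ⊥) :
    (∀ g k : G, (∀ h ∈ H, g⁻¹ * h * g ∈ M) → (∀ h ∈ H, k⁻¹ * h * k ∈ M) →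
      k⁻¹ * g ∈ M) ∧
    Set.Subsingleton {x : G ⧸ M | ∀ h ∈ H, h • x = x} := by
  have key (g k : G) (hg : ∀ h ∈ H, g⁻¹ * h * g ∈ M) (hk : ∀ h ∈ H, k⁻¹ * h * k ∈ M) :
      k⁻¹ * g ∈ M :=
    inv_mul_mem_of_le_conjAct_smul (condM H hH hHfin) hM (condNM M hM hMnt)
      (Subgroup.le_conjAct_smul_iff.2 hg) (Subgroup.le_conjAct_smul_iff.2 hk)
  refine ⟨key, ?_⟩
  intro x hx y hy
  induction x using QuotientGroup.induction_on with | H g => ?_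
  induction y using QuotientGroup.induction_on with | H k => ?_
  refine (QuotientGroup.eq.2 (key g k ?_ ?_)).symm
  · exact fun h hh => QuotientGroup.smul_mk_eq_self_iff.1 (hx h hh)
  · exact fun h hh => QuotientGroup.smul_mk_eq_self_iff.1 (hy h hh)
end

section
/- Let G be a group satisfying hypotheses (H1) and (H2), and let V be an infinite virtually cyclic subgroup of G. Then V_max = ⋃ { N_G(C) : C an infinite cyclic subgroup of V that is normal in V } is a subgroup of G; it is an infinite virtually cyclic subgroup of G containing V, and there exists an infinite cyclic subgroup C₀ of V, normal in V, with V_max = N_G(C₀). -/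
/-!
Choose `c` with `⟨c⟩` of finite index in `V` and let `W` be the commensurator of `⟨c⟩`; the key
point is that `⟨c⟩` has finite index in `W`.

By (H1), `⟨c ^ m⟩` (`m ≠ 0`) has finite index in its centraliser `K_m`, where it is central; by
Schur's theorem the commutator subgroup of `K_m` is finite, hence of order at most the bound `b`
of (H2), and so every element of `K_m` commutes with `c ^ L`, `L = (b!)²`. Thus all elements
commuting with a nonzero power of `c` lie in the single subgroup `K = C_G(c ^ L)`, in which `⟨c⟩`
has finite index. If `h c^p h⁻¹ = c^r`, then `h^j c h^{-j}` lies in `K` and its `p^j`-th power is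
`c^(r^j)`, which forces `|p|^j ≤ [K : ⟨c⟩] |r|^j` for all `j`, so `|p| ≤ |r|`, and by symmetry
`|p| = |r|`. Hence `W` acts on the powers of `c` by `±1`, and `[W : K] ≤ 2`.

The normal core `C₀` of `⟨c⟩` in `W` is then infinite cyclic, normal in `V`, with `N_G(C₀) = W`;
and every infinite cyclic normal subgroup of `V` is commensurable with `⟨c⟩`, so its normaliser
lies in `W`.
-/

/-- A subgroup is infinite cyclic if it is infinite and generated by a single element. -/
def IsInfiniteCyclicSubgroup {G : Type*} [Group G] (C : Subgroup G) : Prop :=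
  (∃ g : G, C = Subgroup.zpowers g) ∧ (C : Set G).Infinite

/-- A subgroup is infinite virtually cyclic if it is infinite and contains a cyclic
subgroup of finite index. -/
def IsInfiniteVirtuallyCyclicSubgroup {G : Type*} [Group G] (V : Subgroup G) : Prop :=
  (V : Set G).Infinite ∧ ∃ C : Subgroup V, C.FiniteIndex ∧ IsCyclic C

/-- `C` is an infinite cyclic subgroup of `V` which is normal in `V`. -/
def IsInfCyclicNormalIn {G : Type*} [Group G] (C V : Subgroup G) : Prop :=
  IsInfiniteCyclicSubgroup C ∧ C ≤ V ∧ ∀ v ∈ V, ∀ c ∈ C, v * c * v⁻¹ ∈ C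

/-- `V_max = ⋃ { N_G(C) : C infinite cyclic subgroup of V normal in V }`. -/
def VmaxSet {G : Type*} [Group G] (V : Subgroup G) : Set G :=
  ⋃ C ∈ {C : Subgroup G | IsInfCyclicNormalIn C V}, (Subgroup.normalizer (C : Set G) : Set G)

/-- (H1): every infinite cyclic subgroup has finite index in its centralizer. -/
def HypH1 (G : Type*) [Group G] : Prop :=
  ∀ C : Subgroup G, IsInfiniteCyclicSubgroup C →
    C.relIndex (Subgroup.centralizer (C : Set G)) ≠ 0

/-- (H2): there is an upper bound on the orders of finite subgroups. -/
def HypH2 (G : Type*) [Group G] : Prop :=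
  ∃ b : ℕ, 0 < b ∧ ∀ H : Subgroup G, (H : Set G).Finite → Nat.card H ≤ b

open Subgroup
open scoped Nat Pointwise commutatorElement

section

variable {G : Type*} [Group G]

theorem relIndex_zpowers_zpow_ne_zero (a : G) {k : ℤ} (hk : k ≠ 0) :
    (zpowers (a ^ k)).relIndex (zpowers a) ≠ 0 := by
  let g : zpowers a ⧸ (zpowers (a ^ k)).subgroupOf (zpowers a) :=
    QuotientGroup.mk ⟨a, mem_zpowers a⟩
  have hgen : ∀ q, q ∈ zpowers g := by
    intro q
    induction q using QuotientGroup.induction_on with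
    | H x =>
      obtain ⟨n, hn⟩ := mem_zpowers_iff.1 x.2
      exact ⟨n, congrArg QuotientGroup.mk
        (Subtype.ext (by simpa using hn) : (⟨a, mem_zpowers a⟩ : zpowers a) ^ n = x)⟩
  have hgk : g ^ k = 1 := by
    rw [← QuotientGroup.mk_zpow, QuotientGroup.eq_one_iff, mem_subgroupOf]
    exact mem_zpowers _
  rw [relIndex, index, ← orderOf_eq_card_of_forall_mem_zpowers hgen]
  exact (isOfFinOrder_iff_zpow_eq_one.2 ⟨k, hk, hgk⟩).orderOf_pos.ne'

theorem Subgroup.Commensurable.of_le {H K : Subgroup G} (hHK : H ≤ K) (h : H.relIndex K ≠ 0) :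
    Commensurable H K :=
  ⟨h, by rw [relIndex_eq_one.2 hHK]; exact one_ne_zero⟩

theorem commensurable_zpowers_zpow (a : G) {k : ℤ} (hk : k ≠ 0) :
    Commensurable (zpowers (a ^ k)) (zpowers a) :=
  .of_le (zpowers_le.2 (zpow_mem (mem_zpowers a) k)) (relIndex_zpowers_zpow_ne_zero a hk)

theorem normalizer_le_commensurator (H : Subgroup G) :
    normalizer (H : Set G) ≤ Commensurable.commensurator H := fun g hg => by
  rw [Commensurable.commensurator_mem_iff, conjAct_pointwise_smul_eq_self hg]

theorem conjAct_smul_zpowers (g a : G) :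
    ConjAct.toConjAct g • zpowers a = zpowers (g * a * g⁻¹) := by
  rw [pointwise_smul_def]
  exact MonoidHom.map_zpowers _ a

theorem mem_commensurator_zpowers_iff {c : G} (hc : ¬IsOfFinOrder c) {g : G} :
    g ∈ Commensurable.commensurator (zpowers c) ↔
      ∃ p r : ℤ, p ≠ 0 ∧ r ≠ 0 ∧ g * c ^ p * g⁻¹ = c ^ r := by
  rw [Commensurable.commensurator_mem_iff, conjAct_smul_zpowers]
  constructor
  · rintro ⟨-, h⟩
    obtain ⟨t, ht, -, hmem⟩ := exists_pow_mem_of_relIndex_ne_zero h (mem_zpowers (g * c * g⁻¹))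
    obtain ⟨r, hr⟩ := mem_zpowers_iff.1 (mem_inf.1 hmem).1
    rw [conj_pow, ← zpow_natCast c] at hr
    refine ⟨t, r, by exact_mod_cast ht.ne', ?_, hr.symm⟩
    rintro rfl
    rw [zpow_zero, eq_comm, conj_eq_one_iff] at hr
    exact hc (isOfFinOrder_iff_zpow_eq_one.2 ⟨t, by exact_mod_cast ht.ne', hr⟩)
  · rintro ⟨p, r, hp, hr, h⟩
    have hpow : zpowers ((g * c * g⁻¹) ^ p) = zpowers (c ^ r) := by rw [conj_zpow, h]
    exact (commensurable_zpowers_zpow _ hp).symm.trans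
      (hpow ▸ commensurable_zpowers_zpow c hr)

theorem not_isOfFinOrder_zpow {c : G} (hc : ¬IsOfFinOrder c) {m : ℤ} (hm : m ≠ 0) :
    ¬IsOfFinOrder (c ^ m) := fun h => by
  obtain ⟨n, hn, hcn⟩ := isOfFinOrder_iff_zpow_eq_one.1 h
  exact hc (isOfFinOrder_iff_zpow_eq_one.2 ⟨m * n, mul_ne_zero hm hn, by rwa [zpow_mul]⟩)

theorem mem_centralizer_zpowers_iff {g x : G} :
    x ∈ centralizer (zpowers g : Set G) ↔ Commute x g :=
  ⟨fun h => (h g (mem_zpowers g)).symm, fun h _ ⟨k, hk⟩ => hk ▸ (h.zpow_right k).symm⟩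

theorem infinite_of_relIndex_ne_zero {H K : Subgroup G} (h : H.relIndex K ≠ 0)
    (hK : (K : Set G).Infinite) : (H : Set G).Infinite := by
  intro hH
  have : Finite H := hH.to_subtype
  have : Finite (H.subgroupOf K) :=
    Finite.of_injective (fun x : H.subgroupOf K => (⟨x.1, x.2⟩ : H))
      fun x y hxy => Subtype.ext (Subtype.ext (congrArg (fun z : H => (z : G)) hxy))
  have : (H.subgroupOf K).FiniteIndex := ⟨h⟩
  exact hK (Set.finite_coe_iff.1
    ((finite_iff_finite_and_finiteIndex (H.subgroupOf K)).2 ⟨‹_›, ‹_›⟩))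

theorem relIndex_ne_zero_of_forall_inv_mul_mem {H K : Subgroup G}
    (h : ∀ a ∈ K, ∀ b ∈ K, a ∉ H → b ∉ H → a⁻¹ * b ∈ H) : H.relIndex K ≠ 0 := by
  by_cases hKH : K ≤ H
  · rw [relIndex_eq_one.2 hKH]
    exact one_ne_zero
  obtain ⟨a, haK, haH⟩ := Set.not_subset.1 hKH
  have : Finite (K ⧸ H.subgroupOf K) := by
    refine Finite.of_surjective
      (fun t : Bool => ((if t then ⟨a, haK⟩ else 1 : K) : K ⧸ H.subgroupOf K)) ?_
    intro q
    induction q using QuotientGroup.induction_on with | H x => ?_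
    by_cases hx : (x : G) ∈ H
    · exact ⟨false, QuotientGroup.eq.2 (by simpa [mem_subgroupOf] using hx)⟩
    · exact ⟨true, QuotientGroup.eq.2 (mem_subgroupOf.2 (h a haK x x.2 haH hx))⟩
  exact index_ne_zero_of_finite

theorem finite_commutatorSet_of_finiteIndex_center (H : Type*) [Group H]
    [(center H).FiniteIndex] : Finite (commutatorSet H) := by
  -- `⁅g, h⁆` only depends on the cosets of `g` and `h` modulo the centre
  have hsub : commutatorSet H ⊆
      Set.range fun q : (H ⧸ center H) × (H ⧸ center H) => ⁅q.1.out, q.2.out⁆ := by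
    rintro _ ⟨g, h, rfl⟩
    obtain ⟨⟨z, hzc⟩, hz⟩ := QuotientGroup.mk_out_eq_mul (center H) g
    obtain ⟨⟨w, hwc⟩, hw⟩ := QuotientGroup.mk_out_eq_mul (center H) h
    rw [mem_center_iff] at hzc hwc
    refine ⟨(g, h), ?_⟩
    dsimp only
    rw [hz, hw]
    calc ⁅g * z, h * w⁆ = g * h * (w * g⁻¹) * w⁻¹ * h⁻¹ := by
          rw [commutatorElement_def, mul_assoc g, ← hzc (h * w)]; group
      _ = ⁅g, h⁆ := by rw [← hwc g⁻¹, commutatorElement_def]; group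
  exact ((Set.finite_range _).subset hsub).to_subtype

theorem pow_factorial_mul_factorial_mem_center {H : Type*} [Group H] [Finite (commutator H)]
    {b : ℕ} (hb : Nat.card (commutator H) ≤ b) (a : H) : a ^ (b ! * b !) ∈ center H := by
  set s := a ^ (b !)
  have hs : ∀ f ∈ commutator H, Commute f s := by
    intro f hf
    -- conjugation by `a` permutes the finite set `commutator H`, which has at most `b` elements
    let σ := (MulAut.toPerm (commutator H)).comp MulAut.conjNormal
    have hσ : σ s = 1 := by
      rw [map_pow, ← orderOf_dvd_iff_pow_eq_one]
      refine (_root_.orderOf_dvd_natCard (σ a)).trans ?_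
      rw [Nat.card_perm]
      exact Nat.factorial_dvd_factorial hb
    have hconj : s * f * s⁻¹ = f :=
      (MulAut.conjNormal_apply s ⟨f, hf⟩).symm.trans
        (congrArg (fun τ : Equiv.Perm (commutator H) => (τ ⟨f, hf⟩ : H)) hσ)
    exact (mul_inv_eq_iff_eq_mul.1 hconj).symm
  rw [pow_mul, mem_center_iff]
  intro g
  have hw : ⁅g, s⁆ ∈ commutator H := by
    rw [_root_.commutator_def]; exact commutator_mem_commutator (mem_top g) (mem_top s)
  have hwb : ⁅g, s⁆ ^ (b !) = 1 := by
    rw [← orderOf_dvd_iff_pow_eq_one]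
    exact ((commutator H).orderOf_dvd_natCard hw).trans (Nat.dvd_factorial Nat.card_pos hb)
  have hconj : g * s ^ (b !) * g⁻¹ = s ^ (b !) := by
    rw [← conj_pow, show g * s * g⁻¹ = ⁅g, s⁆ * s by group, (hs _ hw).mul_pow, hwb, one_mul]
  exact mul_inv_eq_iff_eq_mul.1 hconj

theorem commute_pow_factorial_mul_factorial_of_commute_zpow (h1 : HypH1 G) {b : ℕ}
    (hb : ∀ H : Subgroup G, (H : Set G).Finite → Nat.card H ≤ b) {c : G} (hc : ¬IsOfFinOrder c)
    {m : ℤ} (hm : m ≠ 0) {g : G} (hg : Commute g (c ^ m)) : Commute g (c ^ (b ! * b !)) := by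
  set K := centralizer (zpowers (c ^ m) : Set G)
  have hidx : (zpowers (c ^ m)).relIndex K ≠ 0 :=
    h1 _ ⟨⟨_, rfl⟩, infinite_zpowers.2 (not_isOfFinOrder_zpow hc hm)⟩
  have hcK : c ∈ K := mem_centralizer_zpowers_iff.2 ((Commute.refl c).zpow_right m)
  have : (center K).FiniteIndex := by
    have : ((zpowers (c ^ m)).subgroupOf K).FiniteIndex := ⟨hidx⟩
    refine finiteIndex_of_le (H := (zpowers (c ^ m)).subgroupOf K) fun x hx => ?_
    exact mem_center_iff.2 fun y => Subtype.ext (y.2 x (mem_subgroupOf.1 hx)).symm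
  have : Finite (commutatorSet K) := finite_commutatorSet_of_finiteIndex_center K
  have hcard : Nat.card (commutator K) ≤ b := by
    have hfin : ((commutator K).map K.subtype : Set G).Finite := by
      rw [coe_map]
      exact (Set.finite_coe_iff.1 (inferInstanceAs (Finite (commutator K)))).image _
    have := hb _ hfin
    rwa [card_map_of_injective K.subtype_injective] at this
  have hcentral := mem_center_iff.1 (pow_factorial_mul_factorial_mem_center hcard ⟨c, hcK⟩)
    ⟨g, mem_centralizer_zpowers_iff.2 hg⟩
  exact congrArg Subtype.val hcentral

theorem conj_zpow_mul_eq {h c : G} {p r : ℤ} (hpr : h * c ^ p * h⁻¹ = c ^ r) (t : ℤ) :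
    h * c ^ (p * t) * h⁻¹ = c ^ (r * t) := by
  rw [zpow_mul, ← conj_zpow, hpr, ← zpow_mul]

theorem conj_pow_zpow_pow_eq {h c : G} {p r : ℤ} (hpr : h * c ^ p * h⁻¹ = c ^ r) (j : ℕ) :
    h ^ j * c ^ (p ^ j) * (h ^ j)⁻¹ = c ^ (r ^ j) := by
  induction j with
  | zero => simp
  | succ j ih =>
    calc h ^ (j + 1) * c ^ (p ^ (j + 1)) * (h ^ (j + 1))⁻¹
        = h ^ j * (h * c ^ (p * p ^ j) * h⁻¹) * (h ^ j)⁻¹ := by rw [pow_succ', pow_succ]; group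
      _ = (h ^ j * c ^ (p ^ j) * (h ^ j)⁻¹) ^ r := by
        rw [conj_zpow_mul_eq hpr, conj_zpow, ← zpow_mul, mul_comm]
      _ = c ^ (r ^ (j + 1)) := by rw [ih, ← zpow_mul, pow_succ]

theorem Nat.le_of_forall_pow_le_mul_pow {a b n : ℕ} (hb : 0 < b) (h : ∀ j, a ^ j ≤ n * b ^ j) :
    a ≤ b := by
  by_contra! hba
  have hb' : (0 : ℚ) < b := by exact_mod_cast hb
  obtain ⟨j, hj⟩ := pow_unbounded_of_one_lt (n : ℚ)
    ((one_lt_div hb').2 (by exact_mod_cast hba : (b : ℚ) < a))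
  rw [div_pow, lt_div_iff₀ (pow_pos hb' j)] at hj
  exact (h j).not_gt (by exact_mod_cast hj)

theorem natAbs_le_of_conj_zpow_eq {c : G} (hc : ¬IsOfFinOrder c) {K : Subgroup G}
    (hcK : (zpowers c).relIndex K ≠ 0)
    (hK : ∀ x : G, ∀ m : ℤ, m ≠ 0 → Commute x (c ^ m) → x ∈ K)
    {h : G} {p r : ℤ} (hr : r ≠ 0) (hpr : h * c ^ p * h⁻¹ = c ^ r) : p.natAbs ≤ r.natAbs := by
  refine Nat.le_of_forall_pow_le_mul_pow (n := (zpowers c).relIndex K) (Int.natAbs_pos.2 hr)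
    fun j => ?_
  set x := h ^ j * c * (h ^ j)⁻¹
  have hx : x ^ (p ^ j) = c ^ (r ^ j) := by rw [conj_zpow]; exact conj_pow_zpow_pow_eq hpr j
  have hrj : r ^ j ≠ 0 := pow_ne_zero j hr
  have hxK : x ∈ K := hK x _ hrj (hx ▸ (Commute.refl x).zpow_right _)
  obtain ⟨k, hk, hkn, hxk⟩ := exists_pow_mem_of_relIndex_ne_zero hcK hxK
  obtain ⟨e, he⟩ := mem_zpowers_iff.1 (mem_inf.1 hxk).1
  have hek : e * p ^ j = k * r ^ j := injective_zpow_iff_not_isOfFinOrder.2 hc <| by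
    show c ^ (e * p ^ j) = c ^ ((k : ℤ) * r ^ j)
    rw [zpow_mul, he, ← zpow_natCast, ← zpow_mul, mul_comm, zpow_mul, hx, ← zpow_mul, mul_comm]
  have he0 : e ≠ 0 := by
    rintro rfl
    simp only [zero_mul, zero_eq_mul] at hek
    omega
  calc p.natAbs ^ j ≤ e.natAbs * p.natAbs ^ j :=
        Nat.le_mul_of_pos_left _ (Int.natAbs_pos.2 he0)
    _ = k * r.natAbs ^ j := by
      rw [← Int.natAbs_pow, ← Int.natAbs_mul, hek, Int.natAbs_mul, Int.natAbs_pow]; simp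
    _ ≤ _ := Nat.mul_le_mul_right _ hkn

theorem exists_conj_zpow_eq_zpow_neg {c : G} (hc : ¬IsOfFinOrder c) {K : Subgroup G}
    (hcK : (zpowers c).relIndex K ≠ 0)
    (hK : ∀ x : G, ∀ m : ℤ, m ≠ 0 → Commute x (c ^ m) → x ∈ K)
    {a : G} (ha : a ∈ Commensurable.commensurator (zpowers c)) (haK : a ∉ K) :
    ∃ p : ℤ, p ≠ 0 ∧ a * c ^ p * a⁻¹ = c ^ (-p) := by
  obtain ⟨p, r, hp, hr, hpr⟩ := (mem_commensurator_zpowers_iff hc).1 ha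
  have hrp : a⁻¹ * c ^ r * a⁻¹⁻¹ = c ^ p := by rw [← hpr]; group
  rcases Int.natAbs_eq_natAbs_iff.1 (le_antisymm (natAbs_le_of_conj_zpow_eq hc hcK hK hr hpr)
    (natAbs_le_of_conj_zpow_eq hc hcK hK hp hrp)) with rfl | rfl
  · exact absurd (hK a p hp (mul_inv_eq_iff_eq_mul.1 hpr)) haK
  · exact ⟨-r, neg_ne_zero.2 hr, by rwa [neg_neg]⟩

theorem relIndex_zpowers_commensurator_ne_zero (h1 : HypH1 G) {b : ℕ}
    (hb : ∀ H : Subgroup G, (H : Set G).Finite → Nat.card H ≤ b) {c : G} (hc : ¬IsOfFinOrder c) :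
    (zpowers c).relIndex (Commensurable.commensurator (zpowers c)) ≠ 0 := by
  have hL : ((b ! * b ! : ℕ) : ℤ) ≠ 0 := by positivity
  set K := centralizer (zpowers (c ^ (b ! * b !)) : Set G)
  have hK : ∀ x : G, ∀ m : ℤ, m ≠ 0 → Commute x (c ^ m) → x ∈ K := fun x m hm hx =>
    mem_centralizer_zpowers_iff.2
      (commute_pow_factorial_mul_factorial_of_commute_zpow h1 hb hc hm hx)
  have hcK : (zpowers c).relIndex K ≠ 0 := by
    have := h1 _ ⟨⟨_, rfl⟩, infinite_zpowers.2 (zpow_natCast c _ ▸ not_isOfFinOrder_zpow hc hL)⟩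
    exact fun h0 =>
      this (relIndex_eq_zero_of_le_left (zpowers_le.2 (pow_mem (mem_zpowers c) _)) h0)
  have hKW : K ≤ Commensurable.commensurator (zpowers c) := fun x hx =>
    (mem_commensurator_zpowers_iff hc).2 ⟨_, _, hL, hL, by
      rw [zpow_natCast, (mem_centralizer_zpowers_iff.1 hx).eq, mul_inv_cancel_right]⟩
  have hKW' : K.relIndex (Commensurable.commensurator (zpowers c)) ≠ 0 := by
    refine relIndex_ne_zero_of_forall_inv_mul_mem fun a ha a' ha' haK ha'K => ?_
    obtain ⟨p, hp, hap⟩ := exists_conj_zpow_eq_zpow_neg hc hcK hK ha haK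
    obtain ⟨q, hq, haq⟩ := exists_conj_zpow_eq_zpow_neg hc hcK hK ha' ha'K
    have e1 : a' * c ^ (p * q) * a'⁻¹ = c ^ (-(p * q)) := by
      simpa [mul_comm] using conj_zpow_mul_eq haq p
    have e2 : a * c ^ (p * q) * a⁻¹ = c ^ (-(p * q)) := by
      simpa using conj_zpow_mul_eq hap q
    refine hK _ (p * q) (mul_ne_zero hp hq) ?_
    calc a⁻¹ * a' * c ^ (p * q) = a⁻¹ * (a' * c ^ (p * q) * a'⁻¹) * a' := by group
      _ = c ^ (p * q) * (a⁻¹ * a') := by rw [e1, ← e2]; group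
  rw [← relIndex_mul_relIndex _ _ _ (zpowers_le.2 (hK c 1 one_ne_zero (by simp))) hKW]
  exact mul_ne_zero hcK hKW'

theorem IsInfiniteVirtuallyCyclicSubgroup.exists_zpowers {V : Subgroup G}
    (hV : IsInfiniteVirtuallyCyclicSubgroup V) :
    ∃ c : G, ¬IsOfFinOrder c ∧ zpowers c ≤ V ∧ (zpowers c).relIndex V ≠ 0 := by
  obtain ⟨hVinf, C, hCidx, hCcyc⟩ := hV
  obtain ⟨c, hc⟩ := (C.map V.subtype).isCyclic_iff_exists_zpowers_eq_top.1
    (isCyclic_of_surjective (C.equivMapOfInjective _ V.subtype_injective) (MulEquiv.surjective _))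
  have hidx : (zpowers c).relIndex V ≠ 0 := by
    rw [hc, relIndex, subgroupOf, comap_map_eq_self_of_injective V.subtype_injective C]
    exact hCidx.index_ne_zero
  exact ⟨c, infinite_zpowers.1 (infinite_of_relIndex_ne_zero hidx hVinf), hc ▸ map_subtype_le C,
    hidx⟩

theorem isInfiniteVirtuallyCyclicSubgroup_of_zpowers_le {W : Subgroup G} {c : G}
    (hc : ¬IsOfFinOrder c) (hcW : zpowers c ≤ W) (h : (zpowers c).relIndex W ≠ 0) :
    IsInfiniteVirtuallyCyclicSubgroup W :=
  ⟨(infinite_zpowers.2 hc).mono hcW, (zpowers c).subgroupOf W, ⟨h⟩,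
    isCyclic_of_surjective (subgroupOfEquivOfLe hcW).symm (MulEquiv.surjective _)⟩

theorem exists_normalized_le_of_relIndex_ne_zero {H W : Subgroup G} (h : H.relIndex W ≠ 0) :
    ∃ N : Subgroup G, N ≤ H ∧ N.relIndex W ≠ 0 ∧ W ≤ normalizer (N : Set G) := by
  have : (H.subgroupOf W).FiniteIndex := ⟨h⟩
  set N := (H.subgroupOf W).normalCore.map W.subtype
  have hN : N.subgroupOf W = (H.subgroupOf W).normalCore :=
    comap_map_eq_self_of_injective W.subtype_injective _
  have : (N.subgroupOf W).Normal := hN ▸ normalCore_normal _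
  refine ⟨N, ?_, ?_, le_normalizer_of_normal_subgroupOf (map_subtype_le _)⟩
  · rintro _ ⟨x, hx, rfl⟩
    exact mem_subgroupOf.1 (normalCore_le _ hx)
  · rw [relIndex, hN]
    exact FiniteIndex.index_ne_zero

theorem IsInfiniteCyclicSubgroup.commensurable_zpowers {V D : Subgroup G} {c : G}
    (hD : IsInfiniteCyclicSubgroup D) (hDV : D ≤ V) (hcV : (zpowers c).relIndex V ≠ 0) :
    Commensurable D (zpowers c) := by
  obtain ⟨⟨δ, rfl⟩, hδ⟩ := hD
  obtain ⟨t, ht, -, hδt⟩ := exists_pow_mem_of_relIndex_ne_zero hcV (hDV (mem_zpowers δ))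
  obtain ⟨k, hk⟩ := mem_zpowers_iff.1 (mem_inf.1 hδt).1
  have hk0 : k ≠ 0 := by
    rintro rfl
    exact infinite_zpowers.1 hδ (isOfFinOrder_iff_pow_eq_one.2 ⟨t, ht, by rw [← hk, zpow_zero]⟩)
  have hpow : zpowers (δ ^ (t : ℤ)) = zpowers (c ^ k) := by rw [hk, zpow_natCast]
  exact (commensurable_zpowers_zpow δ (by exact_mod_cast ht.ne')).symm.trans
    (hpow ▸ commensurable_zpowers_zpow c hk0)

theorem normalizer_subset_vmaxSet {C V : Subgroup G} (hC : IsInfCyclicNormalIn C V) :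
    (normalizer (C : Set G) : Set G) ⊆ VmaxSet V :=
  Set.subset_biUnion_of_mem (u := fun C : Subgroup G => (normalizer (C : Set G) : Set G)) hC

theorem vmaxSet_subset_commensurator {V : Subgroup G} {c : G}
    (hcV : (zpowers c).relIndex V ≠ 0) : VmaxSet V ⊆ Commensurable.commensurator (zpowers c) :=
  Set.iUnion₂_subset fun D hD =>
    (normalizer_le_commensurator D).trans (hD.1.commensurable_zpowers hD.2.1 hcV).eq.le

end

/-- For a group satisfying (H1) and (H2) and an infinite virtually cyclic subgroup `V`,
the set `V_max` is a subgroup: it is an infinite virtually cyclic subgroup containing `V`,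
and it equals `N_G(C₀)` for some infinite cyclic subgroup `C₀` of `V` normal in `V`. -/
theorem vmax_is_infinite_virtually_cyclic_subgroup
    {G : Type*} [Group G] (h1 : HypH1 G) (h2 : HypH2 G)
    (V : Subgroup G) (hV : IsInfiniteVirtuallyCyclicSubgroup V) :
    ∃ W : Subgroup G, (W : Set G) = VmaxSet V ∧
      IsInfiniteVirtuallyCyclicSubgroup W ∧ V ≤ W ∧
      ∃ C₀ : Subgroup G, IsInfCyclicNormalIn C₀ V ∧ W = Subgroup.normalizer (C₀ : Set G) := by
  obtain ⟨b, -, hb⟩ := h2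
  obtain ⟨c, hc, hcV, hcVidx⟩ := hV.exists_zpowers
  set W := Commensurable.commensurator (zpowers c)
  have hVW : V ≤ W := le_normalizer.trans
    ((normalizer_le_commensurator V).trans (Commensurable.of_le hcV hcVidx).eq.symm.le)
  have hcW : (zpowers c).relIndex W ≠ 0 := relIndex_zpowers_commensurator_ne_zero h1 hb hc
  obtain ⟨C₀, hC₀c, hC₀W, hWN⟩ := exists_normalized_le_of_relIndex_ne_zero hcW
  have hC₀comm : Commensurable C₀ (zpowers c) :=
    .of_le hC₀c fun h0 => hC₀W (relIndex_eq_zero_of_le_right (hcV.trans hVW) h0)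
  have hNW : normalizer (C₀ : Set G) = W :=
    le_antisymm ((normalizer_le_commensurator C₀).trans hC₀comm.eq.le) hWN
  have hC₀ : IsInfCyclicNormalIn C₀ V := by
    obtain ⟨n, hn⟩ := (le_zpowers_iff c C₀).1 hC₀c
    exact ⟨⟨⟨_, hn⟩, infinite_of_relIndex_ne_zero hC₀comm.1 (infinite_zpowers.2 hc)⟩,
      hC₀c.trans hcV, fun v hv x hx => (mem_normalizer_iff.1 (hWN (hVW hv)) x).1 hx⟩
  refine ⟨W, ?_, isInfiniteVirtuallyCyclicSubgroup_of_zpowers_le hc (hcV.trans hVW) hcW, hVW,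
    C₀, hC₀, hNW.symm⟩
  exact (hNW ▸ normalizer_subset_vmaxSet hC₀).antisymm (vmaxSet_subset_commensurator hcVidx)
end

section
/- Let G be a group satisfying hypothesis (H1), and let b be a positive integer such that the order of every finite subgroup of G divides b; set d = b·b!. Let C be an infinite cyclic subgroup of G and let dC = { x^d : x ∈ C } be the subgroup of d-th powers of elements of C. Then the index e := [C_G(dC) : dC] is finite, and for every nontrivial subgroup D of dC one has dC ≤ C_G(D) and [C_G(D) : dC] ≤ b·e². -/
/-! Write `dC = ⟨c⟩` with `c = g ^ d` of infinite order. A nontrivial `D ≤ dC` is infinite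
cyclic, so by (H1) it has finite index in `K = C_G(D)`; since `D` is central in `K`, so has the
centre of `K`. Then `K` has finitely many commutators, hence (Schur) a finite derived subgroup
`K'`, of order at most `b`. The cosets of `C_K(c)` embed into `K'` via `x ↦ ⁅x, c⁆`, so
`[K : C_K(c)] ≤ b`, and `[K : dC] ≤ [C_G(dC) : dC] * [K : C_K(c)] ≤ e * b ≤ b * e ^ 2`. -/

open scoped commutatorElement

namespace Subgroup

variable {G : Type*} [Group G]

theorem image_pow_zpowers (g : G) (n : ℕ) :
    (fun x : G => x ^ n) '' (zpowers g : Set G) = zpowers (g ^ n) := by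
  rw [coe_zpowers, coe_zpowers, ← Set.range_comp]
  congr 1
  ext k
  simp only [Function.comp_apply, ← zpow_natCast, ← zpow_mul, mul_comm]

theorem isInfiniteCyclicSubgroup_of_le_zpowers {c : G} (hc : ¬IsOfFinOrder c) {D : Subgroup G}
    (hDc : D ≤ zpowers c) (hD : D ≠ ⊥) : IsInfiniteCyclicSubgroup D := by
  obtain ⟨n, rfl⟩ := (le_zpowers_iff c D).mp hDc
  have hn : n ≠ 0 := by rintro rfl; simp at hD
  exact ⟨⟨_, rfl⟩, infinite_zpowers.mpr fun h => hc (h.of_pow hn)⟩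

theorem zpowers_le_centralizer_of_le {c : G} {D : Subgroup G} (hDc : D ≤ zpowers c) :
    zpowers c ≤ centralizer (D : Set G) :=
  (le_centralizer (zpowers c)).trans (centralizer_le hDc)

theorem relIndex_le_relIndex_mul_relIndex {H K L : Subgroup G} (hHK : H ≤ K) (hHL : H ≤ L)
    (hL : H.relIndex L ≠ 0) : H.relIndex K ≤ H.relIndex L * L.relIndex K := by
  rw [← relIndex_mul_relIndex H (L ⊓ K) K (le_inf hHL hHK) inf_le_right, inf_relIndex_right]
  exact Nat.mul_le_mul_right _ (relIndex_le_of_le_right inf_le_left hL)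

theorem subgroupOf_centralizer_le_center (D : Subgroup G) :
    D.subgroupOf (centralizer (D : Set G)) ≤ center (centralizer (D : Set G)) :=
  fun x hx => mem_center_iff.mpr fun y => Subtype.ext (y.2 x hx).symm

theorem commutatorElement_mul_mem_center_left {z : G} (hz : z ∈ center G) (a b : G) :
    ⁅a * z, b⁆ = ⁅a, b⁆ := by
  have hzb : z * b * z⁻¹ = b := by rw [← mem_center_iff.mp hz b, mul_inv_cancel_right]
  calc ⁅a * z, b⁆ = a * (z * b * z⁻¹) * a⁻¹ * b⁻¹ := by group
    _ = ⁅a, b⁆ := by rw [hzb, commutatorElement_def]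

theorem commutatorElement_mul_mem_center {z w : G} (hz : z ∈ center G) (hw : w ∈ center G)
    (a b : G) : ⁅a * z, b * w⁆ = ⁅a, b⁆ := by
  rw [commutatorElement_mul_mem_center_left hz, ← commutatorElement_inv,
    commutatorElement_mul_mem_center_left hw, commutatorElement_inv]

theorem finite_commutatorSet_of_finiteIndex_center [(center G).FiniteIndex] :
    Finite (commutatorSet G) := by
  have : Finite (G ⧸ center G) := finite_quotient_of_finiteIndex
  refine Set.Finite.to_subtype <| (Set.finite_range
    fun p : (G ⧸ center G) × (G ⧸ center G) => ⁅p.1.out, p.2.out⁆).subset ?_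
  rintro _ ⟨x, y, rfl⟩
  obtain ⟨z, hz⟩ := QuotientGroup.mk_out_eq_mul (center G) x
  obtain ⟨w, hw⟩ := QuotientGroup.mk_out_eq_mul (center G) y
  exact ⟨(x, y), by simp only [hz, hw, commutatorElement_mul_mem_center z.2 w.2]⟩

theorem index_centralizer_le_card_commutator [Finite (commutatorSet G)] (g : G) :
    (centralizer {g}).index ≤ Nat.card (_root_.commutator G) :=
  (Finite.card_le_of_embedding (quotientCentralizerEmbedding g)).trans <|
    Nat.card_mono (Set.finite_coe_iff.mp (inferInstanceAs (Finite (_root_.commutator G))))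
      (commutator_eq_closure G ▸ subset_closure)

theorem subgroupOf_centralizer_singleton {K : Subgroup G} {c : G} (hc : c ∈ K) :
    (centralizer {c}).subgroupOf K = centralizer {(⟨c, hc⟩ : K)} := by
  ext x
  simp [mem_subgroupOf, mem_centralizer_singleton_iff, Subtype.ext_iff]

theorem finite_commutatorSet_centralizer {D : Subgroup G}
    (hD : D.relIndex (centralizer (D : Set G)) ≠ 0) :
    Finite (commutatorSet (centralizer (D : Set G))) :=
  have : (D.subgroupOf (centralizer (D : Set G))).FiniteIndex := ⟨hD⟩
  have := finiteIndex_of_le (subgroupOf_centralizer_le_center D)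
  finite_commutatorSet_of_finiteIndex_center

theorem relIndex_centralizer_zpowers_le_card_commutator {K : Subgroup G}
    [Finite (commutatorSet K)] {c : G} (hc : c ∈ K) :
    (centralizer (zpowers c : Set G)).relIndex K ≤ Nat.card (_root_.commutator K) := by
  rw [zpowers_eq_closure, centralizer_closure, relIndex, subgroupOf_centralizer_singleton hc]
  exact index_centralizer_le_card_commutator _

theorem card_le_of_forall_finite_card_dvd {b : ℕ} (hb : 0 < b)
    (hdiv : ∀ H : Subgroup G, (H : Set G).Finite → Nat.card H ∣ b)
    {K : Subgroup G} (L : Subgroup K) [Finite L] : Nat.card L ≤ b := by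
  rw [← card_map_of_injective K.subtype_injective]
  exact Nat.le_of_dvd hb (hdiv _ ((Set.finite_coe_iff.mp ‹Finite L›).image _))

end Subgroup

open Subgroup

/-- Let `G` satisfy (H1), let `b > 0` be such that the order of every finite subgroup of
`G` divides `b`, and put `d = b * b!`. If `C` is an infinite cyclic subgroup of `G` and
`dC` is the subgroup of `d`-th powers of elements of `C`, then the index
`e = [C_G(dC) : dC]` is finite, and every nontrivial subgroup `D` of `dC` satisfies
`dC ≤ C_G(D)` and `[C_G(D) : dC] ≤ b * e²`. -/
theorem index_of_centralizer_bound
    {G : Type*} [Group G] (h1 : HypH1 G)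
    (b : ℕ) (hb : 0 < b)
    (hdiv : ∀ H : Subgroup G, (H : Set G).Finite → Nat.card H ∣ b)
    (d : ℕ) (hd : d = b * Nat.factorial b)
    (C : Subgroup G) (hC : IsInfiniteCyclicSubgroup C)
    (dC : Subgroup G) (hdC : (dC : Set G) = (fun x : G => x ^ d) '' (C : Set G)) :
    dC.relIndex (Subgroup.centralizer (dC : Set G)) ≠ 0 ∧
    ∀ D : Subgroup G, D ≠ ⊥ → D ≤ dC →
      dC ≤ Subgroup.centralizer (D : Set G) ∧
      dC.relIndex (Subgroup.centralizer (D : Set G)) ≤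
        b * (dC.relIndex (Subgroup.centralizer (dC : Set G))) ^ 2 := by
  obtain ⟨⟨g, rfl⟩, hC⟩ := hC
  have hd0 : d ≠ 0 := hd ▸ Nat.mul_ne_zero hb.ne' (Nat.factorial_ne_zero b)
  have hc : ¬IsOfFinOrder (g ^ d) := fun h => infinite_zpowers.mp hC (h.of_pow hd0)
  obtain rfl : dC = zpowers (g ^ d) := SetLike.coe_injective (hdC.trans (image_pow_zpowers g d))
  have he := h1 _ ⟨⟨_, rfl⟩, infinite_zpowers.mpr hc⟩
  refine ⟨he, fun D hD hDc => ⟨zpowers_le_centralizer_of_le hDc, ?_⟩⟩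
  have hcD := zpowers_le_centralizer_of_le hDc
  have := finite_commutatorSet_centralizer
    (h1 D (isInfiniteCyclicSubgroup_of_le_zpowers hc hDc hD))
  set e := (zpowers (g ^ d)).relIndex (centralizer (zpowers (g ^ d) : Set G))
  calc (zpowers (g ^ d)).relIndex (centralizer (D : Set G))
      ≤ e * (centralizer (zpowers (g ^ d) : Set G)).relIndex (centralizer (D : Set G)) :=
        relIndex_le_relIndex_mul_relIndex hcD (le_centralizer _) he
    _ ≤ e * Nat.card (_root_.commutator (centralizer (D : Set G))) :=
        Nat.mul_le_mul_left e
          (relIndex_centralizer_zpowers_le_card_commutator (hcD (mem_zpowers _)))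
    _ ≤ e * b := Nat.mul_le_mul_left e (card_le_of_forall_finite_card_dvd hb hdiv _)
    _ = b * e * 1 := by ring
    _ ≤ b * e * e := Nat.mul_le_mul_left _ (Nat.one_le_iff_ne_zero.mpr he)
    _ = b * e ^ 2 := by ring
end

section
/- Let W be a group and let D be a central subgroup of W which is infinite cyclic and of finite index in W. Then the composite homomorphism D → W → W/[W,W] from D to the abelianization of W is injective, and its image has finite index in W/[W,W]. In particular, the quotient of the abelianization W/[W,W] by its torsion subgroup is an infinite cyclic group. -/
/-!
The transfer `W → Z(W)` is `x ↦ x ^ [W : Z(W)]` and factors through `W/[W,W]`, so an element of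
`D` that dies in the abelianization has finite order, hence is trivial because `D ≅ ℤ`. In
`A = W/[W,W]` the image `S` of `D` is therefore infinite cyclic of finite index. Then
`x ↦ x ^ [A : S]` embeds the torsion-free group `A/T` into `S`, and `S` meets the torsion subgroup
`T` trivially, so it embeds into `A/T`.
-/

open Subgroup

theorem Subgroup.finiteIndex_map_of_surjective {G G' : Type*} [Group G] [Group G']
    {f : G →* G'} (hf : Function.Surjective f) (H : Subgroup G) [H.FiniteIndex] :
    (H.map f).FiniteIndex :=
  ⟨ne_zero_of_dvd_ne_zero FiniteIndex.index_ne_zero (H.index_map_dvd hf)⟩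

theorem IsCyclic.isMulTorsionFree {G : Type*} [Group G] [IsCyclic G] [Infinite G] :
    IsMulTorsionFree G :=
  intCyclicMulEquiv.symm.injective.isMulTorsionFree intCyclicMulEquiv.symm.toMonoidHom

namespace Abelianization

variable {G : Type*} [Group G] [(center G).FiniteIndex]

open scoped IsMulCommutative in
theorem pow_index_center_eq_one_of_of_eq_one {x : G} (hx : of x = 1) :
    x ^ (center G).index = 1 := by
  have hcomm : x ∈ commutator G := by rwa [← ker_of, MonoidHom.mem_ker]
  simpa [MonoidHom.transferCenterPow_apply] using
    congrArg Subtype.val (commutator_subset_ker (MonoidHom.transferCenterPow G) hcomm)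

theorem of_comp_subtype_injective (H : Subgroup G) [IsMulTorsionFree H] :
    Function.Injective (of.comp H.subtype) := by
  refine (injective_iff_map_eq_one _).mpr fun h hh => ?_
  refine (pow_eq_one_iff_left (FiniteIndex.index_ne_zero (H := center G))).mp ?_
  exact Subtype.ext (pow_index_center_eq_one_of_of_eq_one hh)

end Abelianization

namespace CommGroup

variable {A : Type*} [CommGroup A] (S : Subgroup A)

theorem isCyclic_of_finiteIndex_of_isMulTorsionFree [IsMulTorsionFree A] [S.FiniteIndex]
    [IsCyclic S] : IsCyclic A :=
  isCyclic_of_injective ((powMonoidHom S.index).codRestrict S S.pow_index_mem)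
    fun _ _ h => pow_left_injective FiniteIndex.index_ne_zero (congrArg Subtype.val h)

theorem isCyclic_quotient_torsion [S.FiniteIndex] [IsCyclic S] : IsCyclic (A ⧸ torsion A) :=
  have := finiteIndex_map_of_surjective (QuotientGroup.mk'_surjective (torsion A)) S
  have := isCyclic_of_surjective _ ((QuotientGroup.mk' (torsion A)).subgroupMap_surjective S)
  isCyclic_of_finiteIndex_of_isMulTorsionFree (S.map (QuotientGroup.mk' (torsion A)))

theorem mk_comp_subtype_injective [IsMulTorsionFree S] :
    Function.Injective ((QuotientGroup.mk' (torsion A)).comp S.subtype) := by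
  refine (injective_iff_map_eq_one _).mpr fun s hs => ?_
  have hfin : IsOfFinOrder (s : A) := (mem_torsion _).mp ((QuotientGroup.eq_one_iff _).mp hs)
  by_contra hne
  exact not_isOfFinOrder_of_isMulTorsionFree hne (Submonoid.isOfFinOrder_coe.mp hfin)

theorem infinite_quotient_torsion [IsMulTorsionFree S] [Infinite S] : Infinite (A ⧸ torsion A) :=
  .of_injective _ (mk_comp_subtype_injective S)

end CommGroup

/-- If `D` is a central infinite cyclic subgroup of finite index in a group `W`, then the
composite `D → W → W/[W,W]` is injective with image of finite index; in particular the
quotient of the abelianization of `W` by its torsion subgroup is infinite cyclic. -/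
theorem abelianization_mod_torsion_infinite_cyclic
    {W : Type*} [Group W] (D : Subgroup W)
    (hcentral : D ≤ Subgroup.center W)
    (hcyc : (∃ g : W, D = Subgroup.zpowers g) ∧ (D : Set W).Infinite)
    (hfi : D.FiniteIndex) :
    Function.Injective ((Abelianization.of (G := W)).comp D.subtype) ∧
    (D.map (Abelianization.of (G := W))).FiniteIndex ∧
    (IsCyclic (Abelianization W ⧸ CommGroup.torsion (Abelianization W)) ∧
     Infinite (Abelianization W ⧸ CommGroup.torsion (Abelianization W))) := by
  obtain ⟨⟨g, rfl⟩, hinf⟩ := hcyc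
  have : Infinite (zpowers g) := hinf.to_subtype
  have : IsMulTorsionFree (zpowers g) := IsCyclic.isMulTorsionFree
  have : (center W).FiniteIndex := finiteIndex_of_le hcentral
  have hinj := Abelianization.of_comp_subtype_injective (zpowers g)
  set S := (zpowers g).map Abelianization.of
  have : S.FiniteIndex := finiteIndex_map_of_surjective QuotientGroup.mk_surjective _
  have : IsCyclic S := isCyclic_of_surjective _ (Abelianization.of.subgroupMap_surjective _)
  have : Infinite S :=
    .of_injective (Abelianization.of.subgroupMap _) fun _ _ h => hinj (congrArg Subtype.val h)
  have : IsMulTorsionFree S := IsCyclic.isMulTorsionFree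
  exact ⟨hinj, ‹_›, CommGroup.isCyclic_quotient_torsion S, CommGroup.infinite_quotient_torsion S⟩
end
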